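/- arXiv:2405.19918 — 3 statements merged into one kernel-verified Lean document; each statement's English description precedes it below -/
import Mathlib

section
/- For k ≥ r ≥ 3, p,t ≥ 0 and N₂ ≥ 0, if π is a partition in C_<(k,r|p,t) such that there are exactly N₂ parts marked with 2 in GG(π), then p + t ≥ N₂. -/
namespace Bressoud

/-- A partition: a weakly decreasing list of positive integers. -/
structure Partition where
  parts : List ℕ
  pos : ∀ x ∈ parts, 0 < x
  sorted : parts.Pairwise (· ≥ ·)

namespace Partition

/-- `|π|`, the sum of the parts of `π`. -/
def size (π : Partition) : ℕ := π.parts.sum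

/-- `ℓ(π)`, the number of parts of `π`. -/
def numParts (π : Partition) : ℕ := π.parts.length

end Partition

lemma exists_pos_not_mem (s : List ℕ) : ∃ n, 0 < n ∧ n ∉ s := by
  refine ⟨s.sum + 1, Nat.succ_pos _, fun h => ?_⟩
  have := List.single_le_sum (l := s) (fun x _ => Nat.zero_le x) _ h
  omega

/-- The least positive integer not occurring in `s`. -/
def mex1 (s : List ℕ) : ℕ := Nat.find (exists_pos_not_mem s)

/-- Parts `p ≥ q` conflict (must receive different marks) when `p - q ≤ 2`,
with strict inequality when `p` is odd. -/
def conflict (p q : ℕ) : Bool :=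
  if p % 2 = 1 then decide (p - q < 2) else decide (p - q ≤ 2)

/-- Greedy computation of the Göllnitz–Gordon marking: the parts are processed
from smallest to largest (second argument: remaining parts in increasing
order; first argument: already processed parts with their marks), and each
part receives the least positive mark different from the marks of all already
processed conflicting parts. -/
def ggAux : List (ℕ × ℕ) → List ℕ → List (ℕ × ℕ)
  | acc, [] => acc
  | acc, p :: rest =>
      ggAux ((p, mex1 ((acc.filter fun q => conflict p q.1).map Prod.snd)) :: acc) rest

/-- The Göllnitz–Gordon marking `GG(π)` of `π`, as a list of (part, mark)
pairs in decreasing order of parts. -/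
def ggMarks (π : Partition) : List (ℕ × ℕ) := ggAux [] π.parts.reverse

/-- There is an `m`-marked part equal to `x` in `GG(π)`. -/
def Marked (π : Partition) (x m : ℕ) : Prop := (x, m) ∈ ggMarks π

instance (π : Partition) (x m : ℕ) : Decidable (Marked π x m) := by
  unfold Marked; infer_instance

/-- The `i`-th row of `GG(π)`: the `i`-marked parts, in decreasing order. -/
def row (π : Partition) (i : ℕ) : List ℕ :=
  ((ggMarks π).filter fun q => q.2 == i).map Prod.fst

/-- `N_i(π)`: the number of `i`-marked parts of `π`. -/
def Nmk (π : Partition) (i : ℕ) : ℕ := (row π i).length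

/-- `π^{(i)}_j` as a natural number (meaningful for `1 ≤ j ≤ N_i(π)`;
junk value `0` otherwise). -/
def nth (π : Partition) (i j : ℕ) : ℕ := (row π i).getD (j - 1) 0

/-- The canonical embedding of the natural numbers into `EReal`. -/
noncomputable def natE (n : ℕ) : EReal := ((n : ℝ) : EReal)

/-- `π^{(i)}_j` as an extended real, with the conventions `π^{(i)}_0 = +∞`
and `π^{(i)}_j = -∞` for `j > N_i(π)`. -/
noncomputable def rowVal (π : Partition) (i j : ℕ) : EReal :=
  if j = 0 then ⊤
  else
    match (row π i)[j - 1]? with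
    | some x => natE x
    | none => ⊥

/-- The largest `l ≥ 0` such that there is no odd part of `π` greater than or
equal to `π^{(2)}_l` (the indices `1 ≤ j ≤ N₂(π)` with this property form an
initial segment, so this is also their number). -/
def bigL (π : Partition) : ℕ :=
  ((List.range' 1 (Nmk π 2)).filter fun j =>
    decide (∀ x ∈ π.parts, x % 2 = 1 → x < nth π 2 j)).length

/-- `startPair π b = (starting type of π^{(2)}_b, s_b(π))` for `1 ≤ b ≤ N₂(π)`.
Starting types are encoded by integers: `-1` stands for `s₋₁`, and `0,1,2,3`
for `s₀,s₁,s₂,s₃`; the value `9` is a junk value used when no case applies. -/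
def startPair (π : Partition) : ℕ → ℤ × ℕ
  | 0 => (9, 0)
  | b + 1 =>
    let v := nth π 2 (b + 1)
    if bigL π < b + 1 then (-1, 0)
    else
      let okLow : Bool :=
        if b = 0 then !decide ((v + 2) ∈ π.parts)
        else !decide (Marked π (v + 2) 1) || decide ((startPair π b).2 = v + 2)
      let ok2 : Bool :=
        if b = 0 then decide (Marked π (v + 2) 1)
        else decide (Marked π (v + 2) 1) && !decide ((startPair π b).2 = v + 2)
      if decide (Marked π (v - 1) 1) && okLow then (0, v - 1)
      else if decide (Marked π (v - 2) 1) && okLow then (1, v - 2)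
      else if ok2 then (2, v + 2)
      else if decide (Marked π v 1) then (3, v)
      else (9, 0)

/-- The starting type of `π^{(2)}_b`, encoded as an integer. -/
def startType (π : Partition) (b : ℕ) : ℤ := (startPair π b).1

/-- The set `C(k,r)`: partitions with no repeated odd part, in which the parts
equal to `1` and `2` have marks at most `r - 1`, and whose Göllnitz–Gordon
marking has at most `k - 1` rows. -/
def C (k r : ℕ) : Set Partition :=
  { π | (∀ x, x % 2 = 1 → π.parts.count x ≤ 1) ∧
        (∀ x m, Marked π x m → x ≤ 2 → m ≤ r - 1) ∧
        (∀ x m, Marked π x m → m ≤ k - 1) }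

/-- The set `C_<(k,r|p,t)`. -/
noncomputable def Clt (k r p t : ℕ) : Set Partition :=
  { π | π ∈ C k r ∧
        (∀ x ∈ π.parts, x % 2 = 1 → x < 2 * t + 1) ∧
        rowVal π 2 (p + 1) < natE (2 * t + 1) ∧
        natE (2 * t + 1) < rowVal π 2 p ∧
        (rowVal π 2 p = natE (2 * t + 2) →
          startType π p = 2 ∨ startType π p = 3) ∧
        (rowVal π 2 (p + 1) = natE (2 * t) →
          startType π (p + 1) = 0 ∨ startType π (p + 1) = 1) }

/-- The set `C_=(k,r|p,t)`. -/
noncomputable def Ceq (k r p t : ℕ) : Set Partition :=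
  { π | π ∈ C k r ∧
        (2 * t + 1) ∈ π.parts ∧
        (∀ x ∈ π.parts, x % 2 = 1 → x ≤ 2 * t + 1) ∧
        (∀ m, Marked π (2 * t + 1) m → m ≤ 2) ∧
        natE (2 * t + 2) ≤ rowVal π 2 p ∧
        rowVal π 2 (p + 1) ≤ natE (2 * t + 2) ∧
        ((∃ j, 1 ≤ j ∧ j ≤ Nmk π 2 ∧ nth π 2 j = 2 * t + 2 ∧ startType π j = 0) →
          rowVal π 2 (p + 1) = natE (2 * t + 2) ∧
          ∃ i, 1 ≤ i ∧ i ≤ p + 1 ∧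
            nth π 2 i = 2 * t + 2 + 4 * (p + 1 - i) ∧
            π.parts.count (2 * t + 2 + 4 * (p + 1 - i)) = 1) ∧
        ((∃ j, 1 ≤ j ∧ j ≤ Nmk π 2 ∧ nth π 2 j = 2 * t + 2 ∧ startType π j = 2) →
          rowVal π 2 p = natE (2 * t + 2)) ∧
        ((2 * t + 2) ∈ π.parts → ¬ Marked π (2 * t + 2) 2 →
          rowVal π 2 p = natE (2 * t + 4) ∧ startType π p = 3 ∧
          ∃ i, 1 ≤ i ∧ i ≤ p ∧
            nth π 2 i = 2 * t + 4 + 4 * (p - i) ∧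
            (2 * t + 4 + 4 * (p - i) + 2) ∉ π.parts) }

/-- The first starting cluster index `p₁` of `π` (with `p₀ = p + 1`): the least
`j ≥ 1` such that `π^{(2)}_j = π^{(2)}_p + 4(p - j)` and all of
`π^{(2)}_j, …, π^{(2)}_p` have the same starting type as `π^{(2)}_p`. -/
def firstCluster (π : Partition) (p : ℕ) : ℕ :=
  ((List.range' 1 p).filter fun j =>
    (List.range' j (p + 1 - j)).all fun i =>
      decide (nth π 2 i = nth π 2 p + 4 * (p - i)) &&
      decide (startType π i = startType π p)).headD p

/-- The set `ℰ(k,r)` of partitions in `C(k,r)` with no odd parts. -/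
def E (k r : ℕ) : Set Partition :=
  { π | π ∈ C k r ∧ ∀ x ∈ π.parts, x % 2 = 0 }

/-- `C_<(k,r|m) = ⋃_{p+t=m} C_<(k,r|p,t)`. -/
noncomputable def Cltm (k r m : ℕ) : Set Partition :=
  { π | ∃ p t, p + t = m ∧ π ∈ Clt k r p t }

/-- `C_=(k,r|m) = ⋃_{p+t=m} C_=(k,r|p,t)`. -/
noncomputable def Ceqm (k r m : ℕ) : Set Partition :=
  { π | ∃ p t, p + t = m ∧ π ∈ Ceq k r p t }

/-- `I_N`: partitions into distinct odd parts, each at least `2N + 1`. -/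
def Iset (N : ℕ) : Set Partition :=
  { ζ | (∀ x ∈ ζ.parts, x % 2 = 1 ∧ 2 * N + 1 ≤ x) ∧ ζ.parts.Nodup }

/-- `F(3,3)`: pairs `(π, ζ)` with `π ∈ ℰ(3,3)` and `ζ ∈ I_{N₂(π)}`. -/
noncomputable def F33 : Set (Partition × Partition) :=
  { pq | pq.1 ∈ E 3 3 ∧ pq.2 ∈ Iset (Nmk pq.1 2) }

lemma mex1_not_mem (s : List ℕ) : mex1 s ∉ s :=
  (Nat.find_spec (exists_pos_not_mem s)).2

lemma add_two_le_of_conflict_eq_false {x y : ℕ} (h : conflict x y = false) : y + 2 ≤ x := by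
  unfold conflict at h
  split at h <;> simp at h <;> omega

lemma ggAux_pairwise_conflict_imp_ne (l : List ℕ) (acc : List (ℕ × ℕ))
    (hacc : acc.Pairwise fun a b => conflict a.1 b.1 → a.2 ≠ b.2) :
    (ggAux acc l).Pairwise fun a b => conflict a.1 b.1 → a.2 ≠ b.2 := by
  induction l generalizing acc with
  | nil => exact hacc
  | cons p rest ih =>
    refine ih _ (List.pairwise_cons.2 ⟨fun b hb hc heq => ?_, hacc⟩)
    have hmem : b.2 ∈ (acc.filter fun q => conflict p q.1).map Prod.snd :=
      List.mem_map_of_mem (List.mem_filter.2 ⟨hb, hc⟩)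
    exact mex1_not_mem _ (heq ▸ hmem)

lemma ggAux_map_fst (l : List ℕ) (acc : List (ℕ × ℕ)) :
    (ggAux acc l).map Prod.fst = l.reverse ++ acc.map Prod.fst := by
  induction l generalizing acc with
  | nil => simp [ggAux]
  | cons p rest ih => simp [ggAux, ih]

lemma ggMarks_map_fst (π : Partition) : (ggMarks π).map Prod.fst = π.parts := by
  simp [ggMarks, ggAux_map_fst]

lemma row_sublist (π : Partition) (i : ℕ) : (row π i).Sublist π.parts :=
  ggMarks_map_fst π ▸ List.filter_sublist.map _

lemma row_pos (π : Partition) {i x : ℕ} (hx : x ∈ row π i) : 0 < x :=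
  π.pos x ((row_sublist π i).subset hx)

/-- Parts with equal marks never conflict. -/
lemma row_pairwise_add_two_le (π : Partition) (i : ℕ) :
    (row π i).Pairwise fun x y => y + 2 ≤ x := by
  have hrow : ((ggMarks π).filter fun q => q.2 == i).Pairwise
      fun a b => conflict a.1 b.1 → a.2 ≠ b.2 :=
    (ggAux_pairwise_conflict_imp_ne _ [] List.Pairwise.nil).sublist List.filter_sublist
  rw [row, List.pairwise_map]
  refine hrow.imp_of_mem fun ha hb hab => add_two_le_of_conflict_eq_false ?_
  simp only [List.mem_filter, beq_iff_eq] at ha hb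
  simpa using fun hc => hab hc (ha.2.trans hb.2.symm)

lemma length_le_of_pairwise_add_two_le {l : List ℕ} {t : ℕ}
    (hl : l.Pairwise fun a b => b + 2 ≤ a) (hpos : ∀ x ∈ l, 0 < x) (hle : ∀ x ∈ l, x ≤ 2 * t) :
    l.length ≤ t := by
  induction l generalizing t with
  | nil => simp
  | cons a l ih =>
    obtain ⟨hgap, hl⟩ := List.pairwise_cons.1 hl
    have ha := hle a List.mem_cons_self
    have ha0 := hpos a List.mem_cons_self
    have hlen : l.length ≤ t - 1 :=
      ih hl (fun x hx => hpos x (List.mem_cons_of_mem _ hx))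
        fun x hx => by have := hgap x hx; omega
    simp only [List.length_cons]
    omega

lemma natE_lt_natE {m n : ℕ} : natE m < natE n ↔ m < n := by
  simp [natE]

lemma rowVal_succ_of_lt (π : Partition) (i : ℕ) {j : ℕ} (hj : j < Nmk π i) :
    rowVal π i (j + 1) = natE ((row π i)[j]'hj) := by
  simp [rowVal, List.getElem?_eq_getElem hj]

/-- Below `π^{(i)}_{p+1} ≤ 2t` there is room for at most `t` parts of row `i`. -/
theorem Nmk_le_of_rowVal_lt (π : Partition) (i p t : ℕ)
    (h : rowVal π i (p + 1) < natE (2 * t + 1)) : Nmk π i ≤ p + t := by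
  by_contra! hlong
  have hp : p < Nmk π i := by omega
  have hhead : (row π i)[p]'hp ≤ 2 * t := by
    rw [rowVal_succ_of_lt π i hp, natE_lt_natE] at h
    omega
  have htail : ((row π i).drop p).Pairwise fun a b => b + 2 ≤ a :=
    (row_pairwise_add_two_le π i).sublist (List.drop_sublist _ _)
  rw [List.drop_eq_getElem_cons hp] at htail
  have hlen : ((row π i).drop p).length ≤ t := by
    refine length_le_of_pairwise_add_two_le ?_
      (fun x hx => row_pos π (List.mem_of_mem_drop hx)) fun x hx => ?_
    · rwa [List.drop_eq_getElem_cons hp]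
    · rw [List.drop_eq_getElem_cons hp, List.mem_cons] at hx
      rcases hx with rfl | hx
      · exact hhead
      · have := (List.pairwise_cons.1 htail).1 x hx
        omega
  rw [List.length_drop] at hlen
  unfold Nmk at hlong
  omega

theorem Clt_ge_N2_general (k r p t N₂ : ℕ)
    (π : Partition) (hπ : π ∈ Clt k r p t) (hN : Nmk π 2 = N₂) :
    N₂ ≤ p + t :=
  hN ▸ Nmk_le_of_rowVal_lt π 2 p t hπ.2.2.1

/-- Proposition 2.4: if `π ∈ C_<(k,r|p,t)` has `N₂` parts marked `2`,
then `p + t ≥ N₂`. -/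
theorem Clt_ge_N2 (k r p t N₂ : ℕ) (hrk : r ≤ k) (hr : 3 ≤ r)
    (π : Partition) (hπ : π ∈ Clt k r p t) (hN : Nmk π 2 = N₂) :
    N₂ ≤ p + t :=
  Clt_ge_N2_general k r p t N₂ π hπ hN

end Bressoud
end

section
/- For k ≥ r ≥ 3 and p,t ≥ 0, let π be a partition in C_<(k,r|p,t) such that π^{(2)}_p = 2t+2 with starting type s₃. Then π^{(2)}_{p₁} + 4 occurs at most once as a part of π, where p₁ is the first starting cluster index of π. -/
namespace Bressoud

/-!
Suppose `x = π^{(2)}_{p₁} + 4` occurred twice, and write `v = x - 4`. Since `v` has starting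
type `s₃` it is both 1- and 2-marked, so `v + 2` carries neither mark, and `v + 1`, `v + 3` are
odd, hence not parts. The two copies of `x` carry distinct marks, and by the minimality of the
marking the marks 2 and then 1 can only be found on `x` itself. Then `x` is the 2-marked part
just above `v`, and it again has starting type `s₃` (1-marked, with `x - 2`, `x - 1`, `x + 2`
not 1-marked), so the starting cluster extends to the index `p₁ - 1`, contradicting the
minimality of `p₁`.
-/

lemma mex1_pos (s : List ℕ) : 0 < mex1 s := (Nat.find_spec (exists_pos_not_mem s)).1

lemma mem_of_lt_mex1 {s : List ℕ} {m : ℕ} (h0 : 0 < m) (h : m < mex1 s) : m ∈ s := by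
  by_contra hm
  exact Nat.find_min (exists_pos_not_mem s) h ⟨h0, hm⟩

lemma conflict_self (x : ℕ) : conflict x x = true := by
  unfold conflict; split <;> simp

lemma conflict_add_two_of_even {v : ℕ} (hv : v % 2 = 0) : conflict (v + 2) v = true := by
  unfold conflict; rw [if_neg (by omega)]; simp

lemma sub_le_two_of_conflict {x y : ℕ} (h : conflict x y = true) : x - y ≤ 2 := by
  unfold conflict at h
  split at h <;> simp at h <;> omega

/-- The invariant that `ggAux` maintains on its accumulator. -/
inductive IsGreedyMarking : List (ℕ × ℕ) → Prop
  | nil : IsGreedyMarking []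
  | cons {a : ℕ × ℕ} {L : List (ℕ × ℕ)} : IsGreedyMarking L → (∀ q ∈ L, q.1 ≤ a.1) →
      0 < a.2 → (∀ q ∈ L, conflict a.1 q.1 = true → q.2 ≠ a.2) →
      (∀ m, 0 < m → m < a.2 → ∃ q ∈ L, conflict a.1 q.1 = true ∧ q.2 = m) →
      IsGreedyMarking (a :: L)

namespace IsGreedyMarking

variable {L : List (ℕ × ℕ)}

lemma cons_mex1 (hL : IsGreedyMarking L) {p : ℕ} (hp : ∀ q ∈ L, q.1 ≤ p) :
    IsGreedyMarking ((p, mex1 ((L.filter fun q => conflict p q.1).map Prod.snd)) :: L) := by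
  set S := (L.filter fun q => conflict p q.1).map Prod.snd
  have hS : ∀ q ∈ L, conflict p q.1 = true → q.2 ∈ S := fun q hq hc =>
    List.mem_map_of_mem (List.mem_filter.2 ⟨hq, hc⟩)
  refine .cons hL hp (mex1_pos S) (fun q hq hc he => mex1_not_mem S ?_) fun m h0 hm => ?_
  · rw [← show q.2 = mex1 S from he]
    exact hS q hq hc
  · obtain ⟨q, hq, rfl⟩ := List.mem_map.1 (mem_of_lt_mex1 h0 hm)
    exact ⟨q, (List.mem_filter.1 hq).1, (List.mem_filter.1 hq).2, rfl⟩

lemma pos (hL : IsGreedyMarking L) {a : ℕ × ℕ} (ha : a ∈ L) : 0 < a.2 := by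
  induction hL with
  | nil => simp at ha
  | cons _ _ hpos _ _ ih =>
    rcases List.mem_cons.1 ha with rfl | ha
    exacts [hpos, ih ha]

lemma pairwise (hL : IsGreedyMarking L) :
    L.Pairwise fun a b => b.1 ≤ a.1 ∧ (conflict a.1 b.1 = true → a.2 ≠ b.2) := by
  induction hL with
  | nil => exact .nil
  | cons _ hle _ hne _ ih => exact .cons (fun q hq => ⟨hle q hq, fun hc => (hne q hq hc).symm⟩) ih

lemma ne_of_conflict (hL : IsGreedyMarking L) {a b : ℕ × ℕ} (ha : a ∈ L) (hb : b ∈ L)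
    (hlt : b.1 < a.1) (hc : conflict a.1 b.1 = true) : a.2 ≠ b.2 := by
  induction hL with
  | nil => simp at ha
  | cons _ hle _ hne _ ih =>
    rcases List.mem_cons.1 ha with rfl | ha' <;> rcases List.mem_cons.1 hb with rfl | hb'
    · omega
    · exact (hne b hb' hc).symm
    · exact absurd (hle a ha') (by omega)
    · exact ih ha' hb'

lemma exists_conflict_of_lt (hL : IsGreedyMarking L) {a : ℕ × ℕ} (ha : a ∈ L) {m : ℕ}
    (h0 : 0 < m) (hm : m < a.2) : ∃ q ∈ L, q.1 ≤ a.1 ∧ conflict a.1 q.1 = true ∧ q.2 = m := by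
  induction hL with
  | nil => simp at ha
  | cons _ hle _ _ hmin ih =>
    rcases List.mem_cons.1 ha with rfl | ha
    · obtain ⟨q, hq, hc, rfl⟩ := hmin m h0 hm
      exact ⟨q, List.mem_cons_of_mem _ hq, hle q hq, hc, rfl⟩
    · obtain ⟨q, hq, h⟩ := ih ha
      exact ⟨q, List.mem_cons_of_mem _ hq, h⟩

lemma exists_ne_of_two_le_count (hL : IsGreedyMarking L) {x : ℕ}
    (hx : 2 ≤ (L.map Prod.fst).count x) : ∃ a ∈ L, ∃ b ∈ L, a.1 = x ∧ b.1 = x ∧ a.2 ≠ b.2 := by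
  induction hL with
  | nil => simp at hx
  | @cons c L' _ _ _ hne _ ih =>
    by_cases hc : c.1 = x
    · rw [List.map_cons, hc, List.count_cons_self] at hx
      have hx' : x ∈ L'.map Prod.fst := List.count_pos_iff.1 (by omega)
      obtain ⟨b, hb, rfl⟩ := List.mem_map.1 hx'
      exact ⟨c, by simp, b, List.mem_cons_of_mem _ hb, hc, rfl,
        (hne b hb (by rw [hc]; exact conflict_self _)).symm⟩
    · rw [List.map_cons, List.count_cons_of_ne hc] at hx
      obtain ⟨a, ha, b, hb, h⟩ := ih hx
      exact ⟨a, List.mem_cons_of_mem _ ha, b, List.mem_cons_of_mem _ hb, h⟩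

end IsGreedyMarking

lemma ggAux_spec (l : List ℕ) (acc : List (ℕ × ℕ)) (hacc : IsGreedyMarking acc)
    (hl : l.Pairwise (· ≤ ·)) (hle : ∀ y ∈ l, ∀ q ∈ acc, q.1 ≤ y) :
    IsGreedyMarking (ggAux acc l) ∧ (ggAux acc l).map Prod.fst = l.reverse ++ acc.map Prod.fst := by
  induction l generalizing acc with
  | nil => exact ⟨hacc, by simp [ggAux]⟩
  | cons p rest ih =>
    rw [List.pairwise_cons] at hl
    obtain ⟨hgood, hmap⟩ := ih _ (hacc.cons_mex1 (hle p (by simp))) hl.2 fun y hy q hq => by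
      rcases List.mem_cons.1 hq with rfl | hq
      exacts [hl.1 y hy, hle y (List.mem_cons_of_mem _ hy) q hq]
    exact ⟨hgood, by simp [ggAux, hmap]⟩

lemma ggMarks_spec (π : Partition) :
    IsGreedyMarking (ggMarks π) ∧ (ggMarks π).map Prod.fst = π.parts := by
  have := ggAux_spec π.parts.reverse [] .nil (List.pairwise_reverse.2 π.sorted) (by simp)
  simpa [ggMarks] using this

variable {π : Partition}

lemma Marked.mem_parts {x m : ℕ} (h : Marked π x m) : x ∈ π.parts :=
  (ggMarks_spec π).2 ▸ List.mem_map_of_mem (f := Prod.fst) h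

lemma Marked.pos {x m : ℕ} (h : Marked π x m) : 0 < m :=
  (ggMarks_spec π).1.pos h

lemma Marked.ne_of_conflict {x y mx my : ℕ} (hx : Marked π x mx) (hy : Marked π y my)
    (hlt : y < x) (hc : conflict x y = true) : mx ≠ my :=
  (ggMarks_spec π).1.ne_of_conflict hx hy hlt hc

lemma Marked.not_marked_add_two {v m : ℕ} (hv : v % 2 = 0) (h : Marked π v m) :
    ¬ Marked π (v + 2) m := fun h' =>
  h'.ne_of_conflict h (by omega) (conflict_add_two_of_even hv) rfl

/-- The minimality of the marks: a mark below that of `x` sits on a part in `[x - 2, x]`. -/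
lemma Marked.marked_of_lt {x m m' : ℕ} (h : Marked π x m) (h0 : 0 < m') (hlt : m' < m)
    (hgap : ∀ y, x - 2 ≤ y → y < x → ¬ Marked π y m') : Marked π x m' := by
  obtain ⟨q, hq, hqx, hc, rfl⟩ := (ggMarks_spec π).1.exists_conflict_of_lt h h0 hlt
  have hq' : (q.1, q.2) ∈ ggMarks π := hq
  obtain hlt | rfl := hqx.lt_or_eq
  · exact absurd hq' (hgap q.1 (by have := sub_le_two_of_conflict hc; omega) hlt)
  · exact hq'

lemma exists_marked_ne_of_two_le_count {x : ℕ} (hx : 2 ≤ π.parts.count x) :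
    ∃ m₁ m₂, m₁ ≠ m₂ ∧ Marked π x m₁ ∧ Marked π x m₂ := by
  rw [← (ggMarks_spec π).2] at hx
  obtain ⟨a, ha, b, hb, rfl, hab, hne⟩ := (ggMarks_spec π).1.exists_ne_of_two_le_count hx
  exact ⟨a.2, b.2, hne, ha, hab ▸ hb⟩

lemma marked_one_and_two_of_two_le_count {x : ℕ} (hx : 2 ≤ π.parts.count x)
    (hgap : ∀ y m, x - 2 ≤ y → y < x → m ≤ 2 → ¬ Marked π y m) :
    Marked π x 1 ∧ Marked π x 2 := by
  obtain ⟨m₁, m₂, hne, h₁, h₂⟩ := exists_marked_ne_of_two_le_count hx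
  obtain ⟨m, hm, h⟩ : ∃ m, 2 ≤ m ∧ Marked π x m := by
    have := h₁.pos; have := h₂.pos
    rcases Nat.lt_or_ge m₁ 2 with h | h
    exacts [⟨m₂, by omega, h₂⟩, ⟨m₁, h, h₁⟩]
  have hx2 : Marked π x 2 := by
    obtain rfl | hm := hm.eq_or_lt
    exacts [h, h.marked_of_lt two_pos hm fun y h₁ h₂ => hgap y 2 h₁ h₂ le_rfl]
  exact ⟨hx2.marked_of_lt one_pos one_lt_two fun y h₁ h₂ => hgap y 1 h₁ h₂ one_le_two, hx2⟩

lemma mem_row_iff {y i : ℕ} : y ∈ row π i ↔ Marked π y i := by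
  simp only [row, Marked, List.mem_map, List.mem_filter, beq_iff_eq]
  constructor
  · rintro ⟨q, ⟨hq, rfl⟩, rfl⟩
    exact hq
  · exact fun h => ⟨(y, i), ⟨h, rfl⟩, rfl⟩

lemma row_pairwise (i : ℕ) : (row π i).Pairwise (· > ·) := by
  unfold row
  rw [List.pairwise_map]
  refine ((ggMarks_spec π).1.pairwise.filter _).imp_of_mem fun {a b} ha hb ⟨hle, hne⟩ => ?_
  simp only [List.mem_filter, beq_iff_eq] at ha hb
  refine hle.lt_of_ne fun he => hne ?_ (ha.2.trans hb.2.symm)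
  rw [he]; exact conflict_self _

lemma nth_eq_getElem {i j : ℕ} (h1 : 1 ≤ j) (h2 : j ≤ Nmk π i) :
    nth π i j = (row π i)[j - 1]'(by unfold Nmk at h2; omega) :=
  List.getD_eq_getElem _ _ _

lemma nth_marked {i j : ℕ} (h1 : 1 ≤ j) (h2 : j ≤ Nmk π i) : Marked π (nth π i j) i := by
  rw [nth_eq_getElem h1 h2]
  exact mem_row_iff.1 (List.getElem_mem _)

lemma nth_lt_nth {i j j' : ℕ} (h1 : 1 ≤ j) (hjj : j < j') (h2 : j' ≤ Nmk π i) :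
    nth π i j' < nth π i j := by
  rw [nth_eq_getElem h1 (by omega), nth_eq_getElem (by omega) h2]
  exact List.pairwise_iff_getElem.1 (row_pairwise i) _ _ _ _ (by omega)

lemma exists_nth_eq_of_marked {y i : ℕ} (h : Marked π y i) :
    ∃ j, 1 ≤ j ∧ j ≤ Nmk π i ∧ nth π i j = y := by
  obtain ⟨n, hn, hget⟩ := List.getElem_of_mem (mem_row_iff.2 h)
  refine ⟨n + 1, by omega, by unfold Nmk; omega, ?_⟩
  rw [nth_eq_getElem (by omega) (by unfold Nmk; omega)]
  simpa using hget

lemma nth_pred_eq_of_marked {i j w : ℕ} (hj : 1 ≤ j) (hjN : j ≤ Nmk π i) (hw : Marked π w i)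
    (hlt : nth π i j < w) (hgap : ∀ y, nth π i j < y → y < w → ¬ Marked π y i) :
    2 ≤ j ∧ nth π i (j - 1) = w := by
  obtain ⟨j', hj', hj'N, rfl⟩ := exists_nth_eq_of_marked hw
  have hj'j : j' < j := by
    by_contra! h
    obtain rfl | h := h.eq_or_lt
    exacts [lt_irrefl _ hlt, absurd (nth_lt_nth hj h hj'N) (by omega)]
  refine ⟨by omega, ?_⟩
  have hup : nth π i (j - 1) ≤ nth π i j' := by
    obtain h | h := (show j' ≤ j - 1 by omega).eq_or_lt
    exacts [h ▸ le_rfl, (nth_lt_nth hj' h (by omega)).le]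
  have hlow := nth_lt_nth (i := i) (show 1 ≤ j - 1 by omega) (show j - 1 < j by omega) hjN
  by_contra hne
  exact hgap _ hlow (lt_of_le_of_ne hup hne) (nth_marked (by omega) (by omega))

lemma rowVal_eq_natE {i j v : ℕ} (h : rowVal π i j = natE v) :
    1 ≤ j ∧ j ≤ Nmk π i ∧ nth π i j = v := by
  unfold rowVal at h
  split_ifs at h with hj
  · exact absurd h.symm (EReal.coe_ne_top _)
  · split at h
    · rename_i x hx
      obtain ⟨hlt, hget⟩ := List.getElem?_eq_some_iff.1 hx
      have hxv : x = v := by exact_mod_cast (EReal.coe_eq_coe_iff.1 h)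
      refine ⟨by omega, by unfold Nmk; omega, ?_⟩
      rw [nth_eq_getElem (by omega) (by unfold Nmk; omega), hget, hxv]
    · exact absurd h (EReal.bot_ne_coe _)

lemma le_bigL_of_startType_eq_three {b : ℕ} (h : startType π b = 3) : b ≤ bigL π := by
  cases b with
  | zero => exact Nat.zero_le _
  | succ b =>
    by_contra! hlt
    rw [startType, startPair, if_pos hlt] at h
    simp at h

lemma marked_of_startType_eq_three {b : ℕ} (h : startType π b = 3) : Marked π (nth π 2 b) 1 := by
  cases b with
  | zero => simp [startType, startPair] at h
  | succ b =>
    rw [startType, startPair] at h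
    dsimp only at h
    split_ifs at h <;> simp_all

lemma startType_eq_three {b : ℕ} (hb : 1 ≤ b) (hbig : b ≤ bigL π)
    (h1 : ¬ Marked π (nth π 2 b - 1) 1) (h2 : ¬ Marked π (nth π 2 b - 2) 1)
    (h3 : ¬ Marked π (nth π 2 b + 2) 1) (h4 : Marked π (nth π 2 b) 1) :
    startType π b = 3 := by
  obtain ⟨b, rfl⟩ : ∃ b', b = b' + 1 := ⟨b - 1, by omega⟩
  rw [startType, startPair, if_neg (by omega), decide_eq_false h1, decide_eq_false h2,
    decide_eq_false h3, decide_eq_true h4]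
  simp

def IsStartingCluster (π : Partition) (p j : ℕ) : Prop :=
  ∀ i, j ≤ i → i ≤ p → nth π 2 i = nth π 2 p + 4 * (p - i) ∧ startType π i = startType π p

lemma IsStartingCluster.pred {p j : ℕ} (h : IsStartingCluster π p j) (hjp : j ≤ p)
    (hnth : nth π 2 (j - 1) = nth π 2 j + 4) (hst : startType π (j - 1) = startType π j) :
    IsStartingCluster π p (j - 1) := by
  intro i hi hip
  obtain rfl | hi := hi.eq_or_lt
  · obtain ⟨hn, hs⟩ := h j le_rfl hjp
    refine ⟨?_, hst.trans hs⟩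
    obtain rfl | hj := Nat.eq_zero_or_pos j
    · simp at hnth
    · rw [hnth, hn]; omega
  · exact h i (by omega) hip

lemma headD_mem_and_le_of_mem {l : List ℕ} (hl : l.Pairwise (· < ·)) {j : ℕ} (hj : j ∈ l)
    (d : ℕ) : l.headD d ∈ l ∧ l.headD d ≤ j := by
  cases l with
  | nil => simp at hj
  | cons a l =>
    refine ⟨List.mem_cons_self, ?_⟩
    rcases List.mem_cons.1 hj with rfl | hj
    exacts [le_rfl, (List.rel_of_pairwise_cons hl hj).le]

def firstClusterCandidates (π : Partition) (p : ℕ) : List ℕ :=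
  (List.range' 1 p).filter fun j =>
    (List.range' j (p + 1 - j)).all fun i =>
      decide (nth π 2 i = nth π 2 p + 4 * (p - i)) && decide (startType π i = startType π p)

lemma mem_firstClusterCandidates_iff {p j : ℕ} :
    j ∈ firstClusterCandidates π p ↔ 1 ≤ j ∧ j ≤ p ∧ IsStartingCluster π p j := by
  simp only [firstClusterCandidates, List.mem_filter, List.mem_range'_1, List.all_eq_true,
    Bool.and_eq_true, decide_eq_true_eq, IsStartingCluster]
  constructor
  · rintro ⟨hj, h⟩
    exact ⟨hj.1, by omega, fun i h1 h2 => h i ⟨h1, by omega⟩⟩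
  · rintro ⟨h1, h2, h⟩
    exact ⟨⟨h1, by omega⟩, fun i hi => h i hi.1 (by omega)⟩

lemma firstClusterCandidates_pairwise (π : Partition) (p : ℕ) :
    (firstClusterCandidates π p).Pairwise (· < ·) :=
  (List.pairwise_lt_range' (s := 1) (n := p)).filter _

lemma firstCluster_le {p j : ℕ} (hj : 1 ≤ j) (hjp : j ≤ p) (h : IsStartingCluster π p j) :
    firstCluster π p ≤ j :=
  (headD_mem_and_le_of_mem (firstClusterCandidates_pairwise π p)
    (mem_firstClusterCandidates_iff.2 ⟨hj, hjp, h⟩) p).2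

lemma firstCluster_spec {p : ℕ} (hp : 1 ≤ p) :
    1 ≤ firstCluster π p ∧ firstCluster π p ≤ p ∧ IsStartingCluster π p (firstCluster π p) :=
  mem_firstClusterCandidates_iff.1 (headD_mem_and_le_of_mem (firstClusterCandidates_pairwise π p)
    (mem_firstClusterCandidates_iff.2 ⟨hp, le_rfl, fun i h1 h2 => by
      obtain rfl : i = p := by omega
      simp⟩) p).1

lemma not_marked_of_lt_of_lt_add_four {v : ℕ} (heven : v % 2 = 0)
    (hodd : ∀ y ∈ π.parts, y % 2 = 1 → y < v) (hv1 : Marked π v 1) (hv2 : Marked π v 2)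
    (y m : ℕ) (h₁ : v < y) (h₂ : y < v + 4) (hm : m ≤ 2) : ¬ Marked π y m := fun h => by
  obtain rfl | hy : y = v + 2 ∨ y % 2 = 1 := by omega
  · have := h.pos
    interval_cases m
    exacts [hv1.not_marked_add_two heven h, hv2.not_marked_add_two heven h]
  · exact absurd (hodd y h.mem_parts hy) (by omega)

lemma nth_pred_eq_and_startType_pred_eq_three {j : ℕ} (hj : 1 ≤ j) (hjN : j ≤ Nmk π 2)
    (heven : nth π 2 j % 2 = 0) (hodd : ∀ y ∈ π.parts, y % 2 = 1 → y < nth π 2 j)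
    (hst : startType π j = 3) (hcount : 2 ≤ π.parts.count (nth π 2 j + 4)) :
    2 ≤ j ∧ nth π 2 (j - 1) = nth π 2 j + 4 ∧ startType π (j - 1) = 3 := by
  have hgap := not_marked_of_lt_of_lt_add_four heven hodd (marked_of_startType_eq_three hst)
    (nth_marked hj hjN)
  obtain ⟨hx1, hx2⟩ := marked_one_and_two_of_two_le_count hcount fun y m h₁ h₂ hm =>
    hgap y m (by omega) h₂ hm
  obtain ⟨hj2, hnth⟩ := nth_pred_eq_of_marked hj hjN hx2 (by omega) fun y h₁ h₂ =>
    hgap y 2 h₁ h₂ le_rfl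
  refine ⟨hj2, hnth, startType_eq_three (by omega)
    (le_trans (by omega) (le_bigL_of_startType_eq_three hst)) ?_ ?_ ?_ ?_⟩ <;> rw [hnth]
  · exact hgap _ 1 (by omega) (by omega) one_le_two
  · exact hgap _ 1 (by omega) (by omega) one_le_two
  · exact hx1.not_marked_add_two (by omega)
  · exact hx1

theorem firstCluster_plus_four_once_general (k r p t : ℕ)
    (π : Partition) (hπ : π ∈ Clt k r p t)
    (hval : rowVal π 2 p = natE (2 * t + 2)) (hst : startType π p = 3) :
    π.parts.count (nth π 2 (firstCluster π p) + 4) ≤ 1 := by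
  obtain ⟨-, hodd, -⟩ := hπ
  obtain ⟨hp, hpN, hnth_p⟩ := rowVal_eq_natE hval
  obtain ⟨hp₁, hp₁p, hcluster⟩ := firstCluster_spec hp
  obtain ⟨hnth_p₁, hst_p₁⟩ := hcluster _ le_rfl hp₁p
  rw [hst] at hst_p₁
  by_contra! hcount
  obtain ⟨hp₁2, hnth, hst'⟩ := nth_pred_eq_and_startType_pred_eq_three hp₁ (hp₁p.trans hpN)
    (by omega) (fun y hy hy2 => (hodd y hy hy2).trans_le (by omega)) hst_p₁ hcount
  have := firstCluster_le (by omega) (by omega)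
    (hcluster.pred hp₁p hnth (hst'.trans hst_p₁.symm))
  omega

/-- Proposition 2.9: if `π ∈ C_<(k,r|p,t)` with `π^{(2)}_p = 2t + 2` of
starting type `s₃`, then `π^{(2)}_{p₁} + 4` occurs at most once in `π`,
where `p₁` is the first starting cluster index of `π`. -/
theorem firstCluster_plus_four_once (k r p t : ℕ) (hrk : r ≤ k) (hr : 3 ≤ r)
    (π : Partition) (hπ : π ∈ Clt k r p t)
    (hval : rowVal π 2 p = natE (2 * t + 2)) (hst : startType π p = 3) :
    π.parts.count (nth π 2 (firstCluster π p) + 4) ≤ 1 :=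
  firstCluster_plus_four_once_general k r p t π hπ hval hst

end Bressoud
end

section
/- For k ≥ r ≥ 1 and t ≥ 0, let π be a partition in C(k,r) such that 2t+1 and 2t+2 both occur as parts of π. Then every part of π equal to 2t+2 has a mark in GG(π) strictly greater than the mark of 2t+1 in GG(π). -/
namespace Bressoud

lemma mem_of_lt_mex1_s10 {s : List ℕ} {j : ℕ} (hj : 0 < j) (hlt : j < mex1 s) : j ∈ s := by
  by_contra h
  exact Nat.find_min (exists_pos_not_mem s) hlt ⟨hj, h⟩

lemma lt_mex1_of_forall_mem {s : List ℕ} {n : ℕ} (h : ∀ j, 0 < j → j ≤ n → j ∈ s) :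
    n < mex1 s := by
  by_contra! hle
  exact mex1_not_mem s (h _ (Nat.find_spec (exists_pos_not_mem s)).1 hle)

lemma conflict_succ_of_conflict {p q : ℕ} (hp : p % 2 = 1) (h : conflict p q = true) :
    conflict (p + 1) q = true := by
  have hp' : ¬ (p + 1) % 2 = 1 := by omega
  simp only [conflict, hp, hp', if_true, if_false, decide_eq_true_eq] at h ⊢
  omega

lemma conflict_succ_self (p : ℕ) : conflict (p + 1) p = true := by
  unfold conflict
  split_ifs <;> simp

def conflictMarks (acc : List (ℕ × ℕ)) (p : ℕ) : List ℕ :=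
  (acc.filter fun q => conflict p q.1).map Prod.snd

lemma mem_conflictMarks {acc : List (ℕ × ℕ)} {p j : ℕ} :
    j ∈ conflictMarks acc p ↔ ∃ q ∈ acc, conflict p q.1 = true ∧ q.2 = j := by
  simp [conflictMarks]

lemma conflictMarks_subset_cons (acc : List (ℕ × ℕ)) (x : ℕ × ℕ) (p : ℕ) :
    conflictMarks acc p ⊆ conflictMarks (x :: acc) p := fun _ hj => by
  obtain ⟨q, hq, hc, rfl⟩ := mem_conflictMarks.1 hj
  exact mem_conflictMarks.2 ⟨q, List.mem_cons_of_mem _ hq, hc, rfl⟩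

lemma ggAux_cons (acc : List (ℕ × ℕ)) (p : ℕ) (s : List ℕ) :
    ggAux acc (p :: s) = ggAux ((p, mex1 (conflictMarks acc p)) :: acc) s := rfl

lemma ggAux_append (acc : List (ℕ × ℕ)) (s₁ s₂ : List ℕ) :
    ggAux acc (s₁ ++ s₂) = ggAux (ggAux acc s₁) s₂ := by
  induction s₁ generalizing acc with
  | nil => rfl
  | cons p s ih => exact ih _

lemma mem_or_mem_of_mem_ggAux {acc : List (ℕ × ℕ)} {s : List ℕ} {x m : ℕ}
    (h : (x, m) ∈ ggAux acc s) : (x, m) ∈ acc ∨ x ∈ s := by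
  induction s generalizing acc with
  | nil => exact .inl h
  | cons p s ih =>
    rcases ih h with h | h
    · rcases List.mem_cons.1 h with h | h
      · exact .inr (by simp [(Prod.mk.inj h).1])
      · exact .inl h
    · exact .inr (List.mem_cons_of_mem _ h)

lemma lt_of_mem_ggAux {p n : ℕ} (s : List ℕ) {acc : List (ℕ × ℕ)}
    (hblock : ∀ j, 0 < j → j ≤ n → j ∈ conflictMarks acc p)
    (hacc : ∀ m, (p, m) ∈ acc → n < m) {m : ℕ} (hm : (p, m) ∈ ggAux acc s) : n < m := by
  induction s generalizing acc with
  | nil => exact hacc m hm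
  | cons x s ih =>
    refine ih (fun j hj hjn => conflictMarks_subset_cons acc _ p (hblock j hj hjn))
      (fun m' hm' => ?_) hm
    rcases List.mem_cons.1 hm' with h | h
    · obtain ⟨rfl, rfl⟩ := Prod.mk.inj h
      exact lt_mex1_of_forall_mem hblock
    · exact hacc m' h

lemma mem_conflictMarks_succ {p : ℕ} (hp : p % 2 = 1) (acc : List (ℕ × ℕ)) {j : ℕ}
    (hj : 0 < j) (hjM : j ≤ mex1 (conflictMarks acc p)) :
    j ∈ conflictMarks ((p, mex1 (conflictMarks acc p)) :: acc) (p + 1) := by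
  rcases hjM.lt_or_eq with hlt | rfl
  · obtain ⟨q, hq, hc, rfl⟩ := mem_conflictMarks.1 (mem_of_lt_mex1_s10 hj hlt)
    exact mem_conflictMarks.2
      ⟨q, List.mem_cons_of_mem _ hq, conflict_succ_of_conflict hp hc, rfl⟩
  · exact mem_conflictMarks.2 ⟨_, List.mem_cons_self, conflict_succ_self p, rfl⟩

lemma exists_eq_append_of_count_le_one {α : Type*} [LinearOrder α] {l : List α} {a : α}
    (hl : l.Pairwise (· ≤ ·)) (ha : a ∈ l) (hc : l.count a ≤ 1) :
    ∃ s₁ s₂, l = s₁ ++ a :: s₂ ∧ (∀ x ∈ s₁, x < a) ∧ ∀ x ∈ s₂, a < x := by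
  obtain ⟨s₁, s₂, rfl⟩ := List.append_of_mem ha
  simp only [List.count_append, List.count_cons_self] at hc
  have h₁ : a ∉ s₁ := fun h => by have := List.count_pos_iff.2 h; omega
  have h₂ : a ∉ s₂ := fun h => by have := List.count_pos_iff.2 h; omega
  simp only [List.pairwise_append, List.pairwise_cons, List.mem_cons] at hl
  exact ⟨s₁, s₂, rfl,
    fun x hx => (hl.2.2 x hx a (.inl rfl)).lt_of_ne (ne_of_mem_of_not_mem hx h₁),
    fun x hx => (hl.2.1.1 x hx).lt_of_ne (ne_of_mem_of_not_mem hx h₂).symm⟩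

lemma mark_lt_mark_succ_of_odd {p : ℕ} (hp : p % 2 = 1) {l : List ℕ}
    (hl : l.Pairwise (· ≤ ·)) (hmem : p ∈ l) (hcount : l.count p ≤ 1) {m m' : ℕ}
    (hm : (p + 1, m) ∈ ggAux [] l) (hm' : (p, m') ∈ ggAux [] l) : m' < m := by
  obtain ⟨s₁, s₂, rfl, hs₁, hs₂⟩ := exists_eq_append_of_count_le_one hl hmem hcount
  set acc := ggAux [] s₁
  have hacc : ∀ x m, (x, m) ∈ acc → x < p := fun x m h =>
    hs₁ x ((mem_or_mem_of_mem_ggAux h).resolve_left List.not_mem_nil)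
  rw [ggAux_append, ggAux_cons] at hm hm'
  have hm'M : m' = mex1 (conflictMarks acc p) := by
    rcases mem_or_mem_of_mem_ggAux hm' with h | h
    · rcases List.mem_cons.1 h with h | h
      · exact (Prod.mk.inj h).2
      · exact absurd (hacc _ _ h) (lt_irrefl p)
    · exact absurd (hs₂ p h) (lt_irrefl p)
  subst hm'M
  refine lt_of_mem_ggAux s₂ (fun j hj hjM => mem_conflictMarks_succ hp acc hj hjM)
    (fun m h => ?_) hm
  rcases List.mem_cons.1 h with h | h
  · exact absurd (Prod.mk.inj h).1 (by omega)
  · exact absurd (hacc _ _ h) (by omega)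

theorem marks_of_even_gt_general (k r t : ℕ)
    (π : Partition) (hπ : π ∈ C k r)
    (h1 : (2 * t + 1) ∈ π.parts) :
    ∀ m m', Marked π (2 * t + 2) m → Marked π (2 * t + 1) m' → m' < m := by
  intro m m' hm hm'
  have hsorted : π.parts.reverse.Pairwise (· ≤ ·) := List.pairwise_reverse.2 π.sorted
  have hcount : π.parts.reverse.count (2 * t + 1) ≤ 1 := by
    rw [List.count_reverse]
    exact hπ.1 _ (by omega)
  exact mark_lt_mark_succ_of_odd (by omega) hsorted (List.mem_reverse.2 h1) hcount hm hm'

/-- Lemma 2.11: if `π ∈ C(k,r)` and both `2t+1` and `2t+2` occur in `π`, then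
the marks of the parts `2t+2` in `GG(π)` are greater than the mark of `2t+1`. -/
theorem marks_of_even_gt (k r t : ℕ) (hrk : r ≤ k) (hr : 1 ≤ r)
    (π : Partition) (hπ : π ∈ C k r)
    (h1 : (2 * t + 1) ∈ π.parts) (h2 : (2 * t + 2) ∈ π.parts) :
    ∀ m m', Marked π (2 * t + 2) m → Marked π (2 * t + 1) m' → m' < m :=
  marks_of_even_gt_general k r t π hπ h1

end Bressoud
end
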